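/- Let I, J, K be a partition of {1,…,n} and let x ∈ X be arbitrary. The following are equivalent: (i) there exist functions f on the (I∪K)-subtuples of Y and g on the (J∪K)-subtuples of Y such that P(y|x) = f(y_I, y_K) · g(y_J, y_K) for all y ∈ Y; (ii) ⟨u(x), v_H(y)⟩ = 0 for all y ∈ Y and all H ⊆ {1,…,n} with H ∩ I ≠ ∅ and H ∩ J ≠ ∅. -/

import Mathlib

open Finset
open scoped RealInnerProductSpace

/-- Averaging operator π_J. -/
noncomputable def piAvg {ι : Type*} [Fintype ι] [DecidableEq ι] {Z : ι → Type*}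
    [∀ i, Fintype (Z i)] [∀ i, DecidableEq (Z i)] {V : Type*} [AddCommGroup V] [Module ℝ V]
    (J : Finset ι) (w : (∀ i, Z i) → V) : (∀ i, Z i) → V :=
  fun z => (∏ i ∈ Jᶜ, (Fintype.card (Z i) : ℝ))⁻¹ •
    ∑ z' ∈ Finset.univ.filter (fun z' : ∀ i, Z i => ∀ i ∈ J, z' i = z i), w z'

/-- Interaction projection Q_I. -/
noncomputable def Qop {ι : Type*} [Fintype ι] [DecidableEq ι] {Z : ι → Type*}
    [∀ i, Fintype (Z i)] [∀ i, DecidableEq (Z i)] {V : Type*} [AddCommGroup V] [Module ℝ V]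
    (I : Finset ι) (w : (∀ i, Z i) → V) : (∀ i, Z i) → V :=
  ∑ J ∈ I.powerset, ((-1 : ℝ) ^ (I \ J).card) • piAvg J w

/-! The operator `Q_H` annihilates every map that does not depend on some coordinate in `H`, and
by Möbius inversion on the Boolean lattice the `Q_H w` with `H ⊆ T` add up to `π_T w`.
Put `w = ⟨u(x), v(·)⟩`, which is `log P(·|x)` up to an additive constant. A factorisation
`P(·|x) = f g` writes `w = log f + log g` as a sum of a map of the `(I ∪ K)`-coordinates and a map
of the `(J ∪ K)`-coordinates, so `Q_H w = 0` whenever `H` meets both `I` and `J`. Conversely, if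
these `Q_H w` vanish, every other `H` lies in `I ∪ K` or in `J ∪ K`, and inclusion–exclusion over
the two powersets (which meet in the powerset of `K`) gives
`w = π_{I ∪ K} w + π_{J ∪ K} w - π_K w`; exponentiating gives the factorisation. -/

namespace Finset

variable {ι R M : Type*} [DecidableEq ι] [Ring R] [AddCommGroup M] [Module R M]

theorem sum_powerset_insert_neg_one_pow_card_sdiff_smul {a : ι} {H : Finset ι} (ha : a ∉ H)
    (F : Finset ι → M) :
    ∑ J ∈ (insert a H).powerset, (-1 : R) ^ #(insert a H \ J) • F J =
      ∑ J ∈ H.powerset, (-1 : R) ^ #(H \ J) • (F (insert a J) - F J) := by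
  rw [sum_powerset_insert ha, add_comm, ← sum_add_distrib]
  refine sum_congr rfl fun J hJ => ?_
  have haJ : a ∉ J := fun h => ha (mem_powerset.1 hJ h)
  have haHJ : a ∉ H \ J := fun h => ha (mem_sdiff.1 h).1
  rw [insert_sdiff_insert, sdiff_insert_of_notMem ha, insert_sdiff_of_notMem _ haJ,
    card_insert_of_notMem haHJ, pow_succ, smul_sub, mul_neg_one, neg_smul, sub_eq_add_neg]

theorem sum_powerset_sum_powerset_neg_one_pow_card_sdiff_smul (F : Finset ι → M) (T : Finset ι) :
    ∑ H ∈ T.powerset, ∑ J ∈ H.powerset, (-1 : R) ^ #(H \ J) • F J = F T := by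
  induction T using Finset.induction_on generalizing F with
  | empty => simp
  | insert a T ha ih =>
    have hsub : ∀ H ∈ T.powerset, a ∉ H := fun H hH h => ha (mem_powerset.1 hH h)
    rw [sum_powerset_insert ha, sum_congr rfl fun H hH =>
      sum_powerset_insert_neg_one_pow_card_sdiff_smul (hsub H hH) F]
    simp only [smul_sub, sum_sub_distrib, ih]
    abel

end Finset

section Averaging

variable {ι : Type*} [Fintype ι] [DecidableEq ι] {Z : ι → Type*}
  [∀ i, Fintype (Z i)] [∀ i, DecidableEq (Z i)] {V : Type*} [AddCommGroup V] [Module ℝ V]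

theorem piAvg_eq_smul_sum_piecewise [∀ i, Nonempty (Z i)] (J : Finset ι) (w : (∀ i, Z i) → V)
    (z : ∀ i, Z i) :
    piAvg J w z = (∏ i, (Fintype.card (Z i) : ℝ))⁻¹ • ∑ t, w (J.piecewise z t) := by
  set F := univ.filter fun z' : ∀ i, Z i => ∀ i ∈ J, z' i = z i
  have hfiber : ∀ z' ∈ F, #{t | J.piecewise z t = z'} = ∏ i ∈ J, Fintype.card (Z i) := by
    intro z' hz'
    have hfilter : univ.filter (fun t => J.piecewise z t = z') =
        Fintype.piFinset fun i => if i ∈ J then univ else {z' i} := by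
      ext t
      simp only [F, mem_filter, mem_univ, true_and] at hz'
      simp only [mem_filter, mem_univ, true_and, Fintype.mem_piFinset, funext_iff]
      refine forall_congr' fun i => ?_
      by_cases hi : i ∈ J <;> simp [hi, hz', eq_comm]
    rw [hfilter, Fintype.card_piFinset]
    simp [apply_ite, prod_ite_mem]
  have hsum : ∑ t, w (J.piecewise z t) =
      (∏ i ∈ J, (Fintype.card (Z i) : ℝ)) • ∑ z' ∈ F, w z' := by
    rw [← sum_fiberwise_of_maps_to (g := fun t => J.piecewise z t) (t := F)
      (fun t _ => by simp +contextual [F, Finset.piecewise_eq_of_mem]), smul_sum]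
    refine sum_congr rfl fun z' hz' => ?_
    rw [sum_congr rfl fun t ht => congrArg w (mem_filter.1 ht).2, sum_const, hfiber z' hz',
      ← Nat.cast_smul_eq_nsmul ℝ, Nat.cast_prod]
  have hJ : ∏ i ∈ J, (Fintype.card (Z i) : ℝ) ≠ 0 :=
    prod_ne_zero_iff.2 fun i _ => Nat.cast_ne_zero.2 Fintype.card_ne_zero
  have hnorm : (∏ i, (Fintype.card (Z i) : ℝ))⁻¹ * ∏ i ∈ J, (Fintype.card (Z i) : ℝ) =
      (∏ i ∈ Jᶜ, (Fintype.card (Z i) : ℝ))⁻¹ := by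
    rw [← prod_mul_prod_compl J]
    field_simp
  rw [hsum, smul_smul, hnorm]
  rfl

theorem dependsOn_piAvg (J : Finset ι) (w : (∀ i, Z i) → V) : DependsOn (piAvg J w) J := by
  intro z z' h
  have hfilter : ∀ z'' : ∀ i, Z i, (∀ i ∈ J, z'' i = z i) ↔ ∀ i ∈ J, z'' i = z' i :=
    fun z'' => forall₂_congr fun i hi => by rw [h i hi]
  simp only [piAvg, hfilter]

theorem piAvg_insert_of_dependsOn [∀ i, Nonempty (Z i)] {S : Set ι} {w : (∀ i, Z i) → V}
    (hw : DependsOn w S) {i : ι} (hiS : i ∉ S) (J : Finset ι) :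
    piAvg (insert i J) w = piAvg J w := by
  ext z
  rw [piAvg_eq_smul_sum_piecewise, piAvg_eq_smul_sum_piecewise]
  congr 1
  refine sum_congr rfl fun t _ => hw fun j hj => ?_
  rw [piecewise_insert, Function.update_of_ne (ne_of_mem_of_not_mem hj hiS)]

theorem piAvg_univ [∀ i, Nonempty (Z i)] (w : (∀ i, Z i) → V) : piAvg univ w = w := by
  ext z
  have hcard : (∏ i, (Fintype.card (Z i) : ℝ)) ≠ 0 :=
    prod_ne_zero_iff.2 fun i _ => Nat.cast_ne_zero.2 Fintype.card_ne_zero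
  rw [piAvg_eq_smul_sum_piecewise]
  simp only [piecewise_univ, sum_const, card_univ, Fintype.card_pi]
  rw [← Nat.cast_smul_eq_nsmul ℝ, smul_smul, Nat.cast_prod, inv_mul_cancel₀ hcard, one_smul]

theorem piAvg_add (J : Finset ι) (a b : (∀ i, Z i) → V) :
    piAvg J (a + b) = piAvg J a + piAvg J b := by
  ext z
  simp only [piAvg, Pi.add_apply, sum_add_distrib, smul_add]

theorem map_piAvg {W : Type*} [AddCommGroup W] [Module ℝ W] (L : V →ₗ[ℝ] W) (J : Finset ι)
    (w : (∀ i, Z i) → V) (z : ∀ i, Z i) : L (piAvg J w z) = piAvg J (L ∘ w) z := by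
  simp only [piAvg, map_smul, map_sum, Function.comp_apply]

theorem Qop_add (H : Finset ι) (a b : (∀ i, Z i) → V) :
    Qop H (a + b) = Qop H a + Qop H b := by
  simp only [Qop, piAvg_add, smul_add, sum_add_distrib]

theorem map_Qop {W : Type*} [AddCommGroup W] [Module ℝ W] (L : V →ₗ[ℝ] W) (H : Finset ι)
    (w : (∀ i, Z i) → V) (z : ∀ i, Z i) : L (Qop H w z) = Qop H (L ∘ w) z := by
  simp only [Qop, Finset.sum_apply, Pi.smul_apply, map_sum, map_smul, map_piAvg]

theorem Qop_eq_zero_of_dependsOn [∀ i, Nonempty (Z i)] {S : Set ι} {w : (∀ i, Z i) → V}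
    (hw : DependsOn w S) {H : Finset ι} (hH : ¬ (H : Set ι) ⊆ S) : Qop H w = 0 := by
  obtain ⟨i, hiH, hiS⟩ := Set.not_subset.1 hH
  rw [Qop, ← insert_erase hiH,
    sum_powerset_insert_neg_one_pow_card_sdiff_smul (notMem_erase i H)]
  simp only [piAvg_insert_of_dependsOn hw hiS, sub_self, smul_zero, sum_const_zero]

theorem sum_powerset_Qop (T : Finset ι) (w : (∀ i, Z i) → V) :
    ∑ H ∈ T.powerset, Qop H w = piAvg T w :=
  sum_powerset_sum_powerset_neg_one_pow_card_sdiff_smul (fun J => piAvg J w) T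

end Averaging

section Decomposition

variable {ι : Type*} [Fintype ι] [DecidableEq ι] {Z : ι → Type*}
  [∀ i, Fintype (Z i)] [∀ i, DecidableEq (Z i)] [∀ i, Nonempty (Z i)]

theorem eq_piAvg_add_piAvg_sub_piAvg_of_Qop_eq_zero {V : Type*} [AddCommGroup V] [Module ℝ V]
    {I J K : Finset ι} (hIJ : Disjoint I J) (hcover : I ∪ J ∪ K = univ) {w : (∀ i, Z i) → V}
    (hw : ∀ H : Finset ι, (H ∩ I).Nonempty → (H ∩ J).Nonempty → Qop H w = 0) :
    w = piAvg (I ∪ K) w + piAvg (J ∪ K) w - piAvg K w := by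
  have hinter : (I ∪ K).powerset ∩ (J ∪ K).powerset = K.powerset := by
    ext H
    rw [mem_inter, mem_powerset, mem_powerset, ← subset_inter_iff, ← inter_union_distrib_right,
      disjoint_iff_inter_eq_empty.1 hIJ, empty_union, mem_powerset]
  have hvanish : ∀ H ∈ (univ : Finset ι).powerset,
      H ∉ (I ∪ K).powerset ∪ (J ∪ K).powerset → Qop H w = 0 := by
    intro H _ hH
    simp only [mem_union, mem_powerset, not_or, not_subset] at hH
    obtain ⟨⟨j, hjH, hj⟩, ⟨i, hiH, hi⟩⟩ := hH
    have hcover' : ∀ k, k ∈ I ∨ k ∈ J ∨ k ∈ K := fun k => by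
      simpa only [← hcover, mem_union, or_assoc] using mem_univ k
    refine hw H ⟨i, mem_inter.2 ⟨hiH, ?_⟩⟩ ⟨j, mem_inter.2 ⟨hjH, ?_⟩⟩
    · have := hcover' i
      tauto
    · have := hcover' j
      tauto
  calc w = ∑ H ∈ (univ : Finset ι).powerset, Qop H w := by rw [sum_powerset_Qop, piAvg_univ]
    _ = ∑ H ∈ (I ∪ K).powerset ∪ (J ∪ K).powerset, Qop H w :=
      (sum_subset (fun H _ => mem_powerset.2 (subset_univ H)) hvanish).symm
    _ = piAvg (I ∪ K) w + piAvg (J ∪ K) w - piAvg K w := by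
      rw [eq_sub_of_add_eq (sum_union_inter (f := fun H => Qop H w)), hinter,
        sum_powerset_Qop, sum_powerset_Qop, sum_powerset_Qop]

theorem Qop_eq_zero_of_exp_eq_mul {S T : Set ι} {w f g : (∀ i, Z i) → ℝ}
    (hf : DependsOn f S) (hg : DependsOn g T) (hw : ∀ z, Real.exp (w z) = f z * g z)
    {H : Finset ι} (hS : ¬ (H : Set ι) ⊆ S) (hT : ¬ (H : Set ι) ⊆ T) : Qop H w = 0 := by
  have hlog : w = (Real.log ∘ f) + (Real.log ∘ g) := by
    ext z
    have hfg : f z * g z ≠ 0 := hw z ▸ (Real.exp_pos _).ne'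
    rw [Pi.add_apply, Function.comp_apply, Function.comp_apply,
      ← Real.log_mul (left_ne_zero_of_mul hfg) (right_ne_zero_of_mul hfg), ← hw z, Real.log_exp]
  rw [hlog, Qop_add, Qop_eq_zero_of_dependsOn (fun _ _ h => congrArg _ (hf h)) hS,
    Qop_eq_zero_of_dependsOn (fun _ _ h => congrArg _ (hg h)) hT, add_zero]

end Decomposition

theorem condIndep_output_iff_orthogonal_general {n : ℕ}
    (X : Type*)
    (Y : Fin n → Type*) [∀ j, Fintype (Y j)] [∀ j, Nonempty (Y j)] [∀ j, DecidableEq (Y j)]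
    (V : Type*) [NormedAddCommGroup V] [InnerProductSpace ℝ V]
    (u : X → V) (v : (∀ j, Y j) → V)
    (P : X → (∀ j, Y j) → ℝ)
    (hP : ∀ x y, P x y =
      Real.exp ⟪u x, v y⟫ / ∑ y' : ∀ j, Y j, Real.exp ⟪u x, v y'⟫)
    (I J K : Finset (Fin n))
    (hIJ : Disjoint I J) (hIK : Disjoint I K) (hJK : Disjoint J K)
    (hIJK : I ∪ J ∪ K = Finset.univ)
    (x : X) :
    (∃ f g : (∀ j, Y j) → ℝ,
      (∀ y y' : ∀ j, Y j, (∀ j ∈ I ∪ K, y j = y' j) → f y = f y') ∧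
      (∀ y y' : ∀ j, Y j, (∀ j ∈ J ∪ K, y j = y' j) → g y = g y') ∧
      (∀ y : ∀ j, Y j, P x y = f y * g y)) ↔
    (∀ (y : ∀ j, Y j) (H : Finset (Fin n)),
      (H ∩ I).Nonempty → (H ∩ J).Nonempty → ⟪u x, Qop H v y⟫ = 0) := by
  set w : (∀ j, Y j) → ℝ := fun z => ⟪u x, v z⟫
  set Zc := ∑ y', Real.exp (w y')
  have hZc : 0 < Zc := sum_pos (fun _ _ => Real.exp_pos _) univ_nonempty
  have hPx : ∀ y, P x y = Real.exp (w y) / Zc := hP x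
  have hQ : ∀ y H, ⟪u x, Qop H v y⟫ = Qop H w y := fun y H => map_Qop (innerₗ V (u x)) H v y
  simp only [hQ]
  constructor
  · rintro ⟨f, g, hf, hg, hfg⟩ y H ⟨i, hi⟩ ⟨j, hj⟩
    have hw : ∀ z, Real.exp (w z) = (Zc * f z) * g z := fun z => by
      rw [mul_assoc, ← hfg, hPx, mul_div_cancel₀ _ hZc.ne']
    have hjIK : ¬ (H : Set (Fin n)) ⊆ ↑(I ∪ K) := fun h =>
      disjoint_left.1 (disjoint_union_right.2 ⟨hIJ.symm, hJK⟩) (mem_inter.1 hj).2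
        (h (mem_inter.1 hj).1)
    have hiJK : ¬ (H : Set (Fin n)) ⊆ ↑(J ∪ K) := fun h =>
      disjoint_left.1 (disjoint_union_right.2 ⟨hIJ, hIK⟩) (mem_inter.1 hi).2
        (h (mem_inter.1 hi).1)
    rw [Qop_eq_zero_of_exp_eq_mul (fun _ _ h => congrArg (Zc * ·) (hf _ _ h))
      (fun _ _ h => hg _ _ h) hw hjIK hiJK, Pi.zero_apply]
  · intro horth
    have hw := eq_piAvg_add_piAvg_sub_piAvg_of_Qop_eq_zero hIJ hIJK
      fun H hI hJ => funext fun y => horth y H hI hJ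
    refine ⟨fun z => Real.exp (piAvg (I ∪ K) w z) / Zc,
      fun z => Real.exp (piAvg (J ∪ K) w z - piAvg K w z), fun y y' h => ?_, fun y y' h => ?_,
      fun y => ?_⟩
    · dsimp only
      rw [dependsOn_piAvg _ _ h]
    · dsimp only
      rw [dependsOn_piAvg _ _ h, dependsOn_piAvg K w fun j hj => h j (mem_union_right _ hj)]
    · rw [hPx, congrFun hw y, Pi.sub_apply, Pi.add_apply, add_sub_assoc, Real.exp_add,
        div_mul_eq_mul_div]

/-- for a fixed input `x`, conditional independence `Y_I ⊥ Y_J | Y_K` for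
the softmax distribution `P(·|x)` is equivalent to `⟨u(x), v_H(y)⟩ = 0` for every `y` and
every `H` meeting both `I` and `J`. -/
theorem condIndep_output_iff_orthogonal {n : ℕ}
    (X : Type*) [Fintype X] [Nonempty X]
    (Y : Fin n → Type*) [∀ j, Fintype (Y j)] [∀ j, Nonempty (Y j)] [∀ j, DecidableEq (Y j)]
    (V : Type*) [NormedAddCommGroup V] [InnerProductSpace ℝ V] [FiniteDimensional ℝ V]
    (u : X → V) (v : (∀ j, Y j) → V)
    (P : X → (∀ j, Y j) → ℝ)
    (hP : ∀ x y, P x y =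
      Real.exp ⟪u x, v y⟫ / ∑ y' : ∀ j, Y j, Real.exp ⟪u x, v y'⟫)
    (I J K : Finset (Fin n))
    (hIJ : Disjoint I J) (hIK : Disjoint I K) (hJK : Disjoint J K)
    (hIJK : I ∪ J ∪ K = Finset.univ)
    (x : X) :
    (∃ f g : (∀ j, Y j) → ℝ,
      (∀ y y' : ∀ j, Y j, (∀ j ∈ I ∪ K, y j = y' j) → f y = f y') ∧
      (∀ y y' : ∀ j, Y j, (∀ j ∈ J ∪ K, y j = y' j) → g y = g y') ∧
      (∀ y : ∀ j, Y j, P x y = f y * g y)) ↔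
    (∀ (y : ∀ j, Y j) (H : Finset (Fin n)),
      (H ∩ I).Nonempty → (H ∩ J).Nonempty → ⟪u x, Qop H v y⟫ = 0) :=
  condIndep_output_iff_orthogonal_general X Y V u v P hP I J K hIJ hIK hJK hIJK x
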